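/- Let c₀, c₁, c₂ ∈ ℂ, F(t) = t³ + c₂t² + c₁t + c₀, let (z, w) ∈ ℂ² satisfy w² = F(z), and let α, β : ℤ → ℂ satisfy β(n)² = F(α(n)), α(n) ≠ α(n+1), and z ≠ α(n) for all n ∈ ℤ. Define χ(n) = (w + β(n))/(z − α(n)) + (β(n) + β(n+1))/(α(n) − α(n+1)), U(n) = (β(n) + β(n+1))/(α(n+1) − α(n)), W(n) = −c₂ − α(n) − α(n+1). If ψ : ℤ → ℂ satisfies ψ(n+1) = χ(n)·ψ(n) for all n ∈ ℤ, then for all n ∈ ℤ: ψ(n+2) + (U(n) + U(n+1))·ψ(n+1) + (U(n)² + W(n))·ψ(n) = z·ψ(n), i.e., L₂ψ = z·ψ. -/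

import Mathlib

/-!
The quotient `χ n = ψ (n + 1) / ψ n` turns `L₂ ψ = z ψ` into the discrete Riccati equation
`χ (n + 1) χ n + (Uₙ + Uₙ₊₁) χ n + Uₙ² + Wₙ = z`. Writing `χ n = Aₙ - Uₙ` with
`Aₙ = (w + βₙ) / (z - αₙ)`, it becomes `Aₙ₊₁ Aₙ + Uₙ (Aₙ - Aₙ₊₁) + Wₙ = z`, an identity among the
three points `(z, w)`, `γ n`, `γ (n + 1)` of the cubic: after clearing denominators it is a
linear combination of their three curve equations.
-/

theorem secondOrder_of_riccati {R : Type*} [CommRing R] {ψ χ : ℤ → R}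
    (hψ : ∀ n, ψ (n + 1) = χ n * ψ n) {n : ℤ} {p q z : R}
    (hriccati : χ (n + 1) * χ n + p * χ n + q = z) :
    ψ (n + 2) + p * ψ (n + 1) + q * ψ n = z * ψ n := by
  rw [show n + 2 = n + 1 + 1 by ring, hψ (n + 1), hψ n, ← hriccati]
  ring

theorem cubic_three_point_identity {K : Type*} [Field K] {c₀ c₁ c₂ z w a b a' b' : K}
    (hzw : w ^ 2 = z ^ 3 + c₂ * z ^ 2 + c₁ * z + c₀)
    (hab : b ^ 2 = a ^ 3 + c₂ * a ^ 2 + c₁ * a + c₀)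
    (hab' : b' ^ 2 = a' ^ 3 + c₂ * a' ^ 2 + c₁ * a' + c₀)
    (hza : z ≠ a) (hza' : z ≠ a') (haa' : a ≠ a') :
    (w + b') / (z - a') * ((w + b) / (z - a))
      + (b + b') / (a' - a) * ((w + b) / (z - a) - (w + b') / (z - a'))
      - c₂ - a - a' = z := by
  have : z - a ≠ 0 := sub_ne_zero.mpr hza
  have : z - a' ≠ 0 := sub_ne_zero.mpr hza'
  have : a' - a ≠ 0 := sub_ne_zero.mpr haa'.symm
  field_simp
  linear_combination (a' - a) * hzw + (z - a') * hab + (a - z) * hab'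

/-- In the elliptic example, a sequence `ψ` built from the quotient
`χ n = (w + βₙ)/(z − αₙ) + (βₙ + βₙ₊₁)/(αₙ − αₙ₊₁)` via `ψ (n+1) = χ n * ψ n`
is an eigenfunction of the order-2 operator `L₂ = (T + Uₙ)² + Wₙ` with eigenvalue `z`:
`ψ(n+2) + (Uₙ + Uₙ₊₁) ψ(n+1) + (Uₙ² + Wₙ) ψ(n) = z ψ(n)`. -/
theorem elliptic_L2_eigen
    (c₀ c₁ c₂ : ℂ) (z w : ℂ)
    (hzw : w ^ 2 = z ^ 3 + c₂ * z ^ 2 + c₁ * z + c₀)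
    (α β : ℤ → ℂ)
    (hcurve : ∀ n : ℤ, (β n) ^ 2 = (α n) ^ 3 + c₂ * (α n) ^ 2 + c₁ * (α n) + c₀)
    (hα : ∀ n : ℤ, α n ≠ α (n + 1))
    (hz : ∀ n : ℤ, z ≠ α n)
    (χ U W : ℤ → ℂ)
    (hχ : ∀ n : ℤ, χ n = (w + β n) / (z - α n) + (β n + β (n + 1)) / (α n - α (n + 1)))
    (hU : ∀ n : ℤ, U n = (β n + β (n + 1)) / (α (n + 1) - α n))
    (hW : ∀ n : ℤ, W n = -c₂ - α n - α (n + 1))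
    (ψ : ℤ → ℂ) (hψ : ∀ n : ℤ, ψ (n + 1) = χ n * ψ n) :
    ∀ n : ℤ, ψ (n + 2) + (U n + U (n + 1)) * ψ (n + 1) + ((U n) ^ 2 + W n) * ψ n
      = z * ψ n := by
  intro n
  have hχU : ∀ m, χ m = (w + β m) / (z - α m) - U m := fun m => by
    rw [hχ m, hU m, ← neg_sub (α (m + 1)), div_neg, ← sub_eq_add_neg]
  apply secondOrder_of_riccati hψ
  rw [hχU, hχU, hU n, hW n]
  linear_combination
    cubic_three_point_identity hzw (hcurve n) (hcurve (n + 1)) (hz n) (hz (n + 1)) (hα n)
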